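/- The assignment (P, X) ↦ U_{(P,X)} is injective on alternating non-crossing partitions of [m'] ∪ [m]: if (P, X) and (P', X') are alternating non-crossing partitions with U_{(P,X)} = U_{(P',X')} as sets of arcs of Z_{2m}, then P = P' and X = X'. -/
import Mathlib


namespace PY

/-! ### The ∞-gon `Z_{2m}`

Labels are elements of `Fin (2 * m)`, ordered `1' < 1 < 2' < 2 < ⋯ < m' < m`:
the label `2 * i` is the primed (accumulation-point) label `(i+1)'` and the label
`2 * i + 1` is the unprimed label `i + 1`.  A point of `Z_{2m}` is a pair of a label and
an integer. -/

/-- Points of the ∞-gon `Z_{2m}`: a label and an integer. -/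
abbrev Pt (m : ℕ) := Fin (2 * m) × ℤ

/-- Cyclic successor of a label. -/
def cycSucc {n : ℕ} (r : Fin n) : Fin n := ⟨(r.1 + 1) % n, Nat.mod_lt _ r.pos⟩

/-- Cyclic predecessor of a label. -/
def cycPred {n : ℕ} (r : Fin n) : Fin n := ⟨(r.1 + (n - 1)) % n, Nat.mod_lt _ r.pos⟩

/-- Strict lexicographic order on the points of `Z_{2m}`. -/
def ptLt {m : ℕ} (a b : Pt m) : Prop := a.1 < b.1 ∨ (a.1 = b.1 ∧ a.2 < b.2)

/-- `sort2 a b` is the pair `(a, b)` arranged in (weakly) increasing lexicographic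
order; it realizes the notation `|a, b|` for the arc connecting two points. -/
def sort2 {m : ℕ} (a b : Pt m) : Pt m × Pt m :=
  if a.1 < b.1 ∨ (a.1 = b.1 ∧ a.2 ≤ b.2) then (a, b) else (b, a)

/-- An ordered pair of points of `Z_{2m}` is an arc when its endpoints are in increasing
lexicographic order and, if they lie in the same copy of `ℤ`, differ by at least `2`. -/
def IsArc {m : ℕ} (x : Pt m × Pt m) : Prop :=
  ptLt x.1 x.2 ∧ (x.1.1 = x.2.1 → x.1.2 + 2 ≤ x.2.2)

/-- The precovering conditions (PC conditions) for a set of arcs of `Z_{2m}`. -/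
structure PCcond {m : ℕ} (U : Set (Pt m × Pt m)) : Prop where
  pc1 : ∀ p q : Fin (2 * m), p ≠ q → ∀ x1 x2 : ℕ → ℤ, StrictMono x1 → StrictMono x2 →
    (∀ n, ((p, x1 n), (q, x2 n)) ∈ U) →
    ∃ y1 y2 : ℕ → ℤ, StrictAnti y1 ∧ StrictAnti y2 ∧
      ∀ n, sort2 (cycSucc p, y1 n) (cycSucc q, y2 n) ∈ U
  pc2 : ∀ p q : Fin (2 * m), p ≠ cycSucc q → ∀ x1 x2 : ℕ → ℤ,
    StrictAnti x1 → StrictMono x2 →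
    (∀ n, ((p, x1 n), (q, x2 n)) ∈ U) →
    ∃ y1 y2 : ℕ → ℤ, StrictAnti y1 ∧ StrictAnti y2 ∧
      ∀ n, sort2 (p, y1 n) (cycSucc q, y2 n) ∈ U
  pc2' : ∀ p q : Fin (2 * m), q ≠ cycSucc p → p ≠ q → ∀ x1 x2 : ℕ → ℤ,
    StrictMono x1 → StrictAnti x2 →
    (∀ n, ((p, x1 n), (q, x2 n)) ∈ U) →
    ∃ y1 y2 : ℕ → ℤ, StrictAnti y1 ∧ StrictAnti y2 ∧
      ∀ n, sort2 (cycSucc p, y1 n) (q, y2 n) ∈ U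
  pc3 : ∀ p q : Fin (2 * m), ∀ (x1 : ℤ) (x2 : ℕ → ℤ), StrictMono x2 →
    (∀ n, ((p, x1), (q, x2 n)) ∈ U) →
    ∃ y2 : ℕ → ℤ, StrictAnti y2 ∧ ∀ n, sort2 (p, x1) (cycSucc q, y2 n) ∈ U
  pc3' : ∀ p q : Fin (2 * m), p ≠ q → ∀ (x1 : ℕ → ℤ) (x2 : ℤ), StrictMono x1 →
    (∀ n, ((p, x1 n), (q, x2)) ∈ U) →
    ∃ y1 : ℕ → ℤ, StrictAnti y1 ∧ ∀ n, sort2 (cycSucc p, y1 n) (q, x2) ∈ U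

/-- A point is admissible for the subcategory `A`: its label is unprimed, or it is a
point `(q, n)` of a primed copy with `n ≤ z0`. -/
def memA {m : ℕ} (z0 : ℤ) (a : Pt m) : Prop :=
  a.1.1 % 2 = 1 ∨ (a.1.1 % 2 = 0 ∧ a.2 ≤ z0)

/-- The set of arcs `A` determined by the choice of `z0`. -/
def setA (m : ℕ) (z0 : ℤ) : Set (Pt m × Pt m) :=
  {x | memA z0 x.1 ∧ memA z0 x.2}

/-! ### Decorations

The linearly ordered set `{p} ∪ Z^(p) ∪ {p⁺}` is modelled as `WithBot (WithTop ℤ)`: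
`⊥` is the accumulation point `p`, an integer `n` is the point `n` of `Z^(p)`, and the
top element is the accumulation point `p⁺`. -/

/-- The linearly ordered set `{p} ∪ Z^(p) ∪ {p⁺}`. -/
abbrev Dm := WithBot (WithTop ℤ)

/-- An integer, viewed in `{p} ∪ Z^(p) ∪ {p⁺}`. -/
def toDm (n : ℤ) : Dm := ((n : WithTop ℤ) : Dm)

/-- The element `p⁺` of `{p} ∪ Z^(p) ∪ {p⁺}`. -/
def topDm : Dm := ((⊤ : WithTop ℤ) : Dm)

/-- The unprimed label `p ∈ [m]` with index `i`. -/
def unpr {m : ℕ} (i : Fin m) : Fin (2 * m) := ⟨2 * i.1 + 1, by have := i.2; omega⟩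

/-- The primed label `p' ∈ [m']` with index `i`. -/
def prim {m : ℕ} (i : Fin m) : Fin (2 * m) := ⟨2 * i.1, by have := i.2; omega⟩

/-- Four points of `Fin n` (viewed on a circle with its natural cyclic order) are in
(strict, anticlockwise) cyclic order. -/
def Cyc4 {n : ℕ} (a b c d : Fin n) : Prop :=
  (a < b ∧ b < c ∧ c < d) ∨ (b < c ∧ c < d ∧ d < a) ∨
  (c < d ∧ d < a ∧ a < b) ∨ (d < a ∧ a < b ∧ b < c)

/-- A partition (setoid) of `Fin n` is non-crossing if there are no elements
`i1, j1, i2, j2` in cyclic order with `i1, i2` in one block and `j1, j2` in a different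
block. -/
def IsNoncrossing {n : ℕ} (P : Setoid (Fin n)) : Prop :=
  ∀ i1 j1 i2 j2 : Fin n, Cyc4 i1 j1 i2 j2 → P.r i1 i2 → P.r j1 j2 → P.r i1 j1

/-! ### Alternating non-crossing partitions and the arc sets `U_{(P,X)}` -/

/-- A point of `Z_{2m}` belongs to the interval `[x_{p⁻}, p⁺)` attached to the primed
label `p' ∈ [m']` of index `j`: it lies in the primed copy `Z^(p)`, or in the unprimed
copy `Z^(p⁻)` above the decoration `x_{p⁻}`. -/
def altRegion {m : ℕ} (x : Fin m → Dm) (j : Fin m) (a : Pt m) : Prop :=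
  a.1 = prim j ∨ (a.1 = unpr (cycPred j) ∧ x (cycPred j) ≤ toDm a.2)

/-- The set of arcs `U_{(P,X)}` associated with an alternating non-crossing partition
`(P, X)`: arcs both of whose endpoints lie in `⋃_{p ∈ B} [x_{p⁻}, p⁺)` for a single
block `B` of `P`. -/
def altU {m : ℕ} (P : Setoid (Fin m)) (x : Fin m → Dm) : Set (Pt m × Pt m) :=
  {a | IsArc a ∧ ∃ b : Fin m,
    (∃ j, P.r b j ∧ altRegion x j a.1) ∧ (∃ j, P.r b j ∧ altRegion x j a.2)}

end PY

/-!
STATEMENT 14: The assignment (P, X) ↦ U_{(P,X)} is injective on alternating non-crossing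
partitions of [m'] ∪ [m]: if U_{(P,X)} = U_{(P',X')} as sets of arcs of Z_{2m}, then
P = P' and X = X'.
-/

namespace PY

section Aux
variable {m : ℕ}

lemma cycPred_cycSucc {n : ℕ} (j : Fin n) : cycPred (cycSucc j) = j := by
  have hn : 0 < n := j.pos
  apply Fin.ext
  show ((j.1 + 1) % n + (n - 1)) % n = j.1
  rw [Nat.mod_add_mod]
  have : j.1 + 1 + (n - 1) = j.1 + n := by omega
  rw [this, Nat.add_mod_right, Nat.mod_eq_of_lt j.2]

lemma cycSucc_cycPred {n : ℕ} (j : Fin n) : cycSucc (cycPred j) = j := by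
  have hn : 0 < n := j.pos
  apply Fin.ext
  show ((j.1 + (n - 1)) % n + 1) % n = j.1
  rw [Nat.mod_add_mod]
  have : j.1 + (n - 1) + 1 = j.1 + n := by omega
  rw [this, Nat.add_mod_right, Nat.mod_eq_of_lt j.2]

lemma dm_ext {a b : Dm} (h : ∀ n : ℤ, a ≤ toDm n ↔ b ≤ toDm n) : a = b := by
  induction a using WithBot.recBotCoe with
  | bot =>
    induction b using WithBot.recBotCoe with
    | bot => rfl
    | coe t =>
      induction t using WithTop.recTopCoe with
      | top => have := (h 0).mp bot_le; simp [toDm] at this; exact absurd this (by decide)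
      | coe k =>
        have := (h (k-1)).mp bot_le; simp only [toDm, WithBot.coe_le_coe,
          WithTop.coe_le_coe] at this; omega
  | coe s =>
    induction s using WithTop.recTopCoe with
    | top =>
      induction b using WithBot.recBotCoe with
      | bot => have := (h 0).mpr bot_le; simp [toDm] at this; exact absurd this (by decide)
      | coe t =>
        induction t using WithTop.recTopCoe with
        | top => rfl
        | coe k =>
          have := (h k).mpr (by simp [toDm]); simp [toDm] at this
    | coe j =>
      induction b using WithBot.recBotCoe with
      | bot =>
        have := (h (j-1)).mpr bot_le; simp only [toDm, WithBot.coe_le_coe,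
          WithTop.coe_le_coe] at this; omega
      | coe t =>
        induction t using WithTop.recTopCoe with
        | top => have := (h j).mp (by simp [toDm]); simp [toDm] at this
        | coe k =>
          have h1 : (k:ℤ) ≤ j := by
            have := (h j).mp (by simp [toDm])
            simpa only [toDm, WithBot.coe_le_coe, WithTop.coe_le_coe] using this
          have h2 : (j:ℤ) ≤ k := by
            have := (h k).mpr (by simp [toDm])
            simpa only [toDm, WithBot.coe_le_coe, WithTop.coe_le_coe] using this
          simp [le_antisymm h2 h1]

lemma prim_ne_unpr (i l : Fin m) : prim i ≠ unpr l := by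
  intro h
  have := congrArg Fin.val h
  simp only [prim, unpr] at this
  omega

lemma prim_inj {i k : Fin m} (h : prim i = prim k) : i = k := by
  have := congrArg Fin.val h
  simp only [prim] at this
  exact Fin.ext (by omega)

lemma unpr_inj {i k : Fin m} (h : unpr i = unpr k) : i = k := by
  have := congrArg Fin.val h
  simp only [unpr] at this
  exact Fin.ext (by omega)

lemma altRegion_prim (x : Fin m → Dm) (k i : Fin m) (z : ℤ) :
    altRegion x k (prim i, z) ↔ k = i := by
  constructor
  · rintro (h | ⟨h, -⟩)
    · exact (prim_inj h).symm
    · exact absurd h (prim_ne_unpr _ _)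
  · rintro rfl; exact Or.inl rfl

lemma altRegion_unpr (x : Fin m → Dm) (k j : Fin m) (n : ℤ) :
    altRegion x k (unpr j, n) ↔ k = cycSucc j ∧ x j ≤ toDm n := by
  constructor
  · rintro (h | ⟨h, hx⟩)
    · exact absurd h.symm (prim_ne_unpr _ _)
    · have hj : cycPred k = j := unpr_inj h.symm
      subst hj
      exact ⟨(cycSucc_cycPred k).symm, hx⟩
  · rintro ⟨rfl, hx⟩
    exact Or.inr ⟨by rw [cycPred_cycSucc], by rw [cycPred_cycSucc]; exact hx⟩

/-- Both endpoints lie in the region of a single block. -/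
def good (P : Setoid (Fin m)) (x : Fin m → Dm) (a1 a2 : Pt m) : Prop :=
  ∃ b : Fin m, (∃ j, P.r b j ∧ altRegion x j a1) ∧ (∃ j, P.r b j ∧ altRegion x j a2)

lemma mem_altU_iff_good {P : Setoid (Fin m)} {x : Fin m → Dm} {a1 a2 : Pt m}
    (h : a1.1 < a2.1) : (a1, a2) ∈ altU P x ↔ good P x a1 a2 := by
  constructor
  · exact fun h' => h'.2
  · exact fun hg => ⟨⟨Or.inl h, fun he => absurd he (ne_of_lt h)⟩, hg⟩

lemma good_symm {P : Setoid (Fin m)} {x : Fin m → Dm} {a1 a2 : Pt m} :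
    good P x a1 a2 ↔ good P x a2 a1 :=
  ⟨fun ⟨b, h1, h2⟩ => ⟨b, h2, h1⟩, fun ⟨b, h1, h2⟩ => ⟨b, h2, h1⟩⟩

lemma good_congr {P P' : Setoid (Fin m)} {x x' : Fin m → Dm}
    (h : altU P x = altU P' x') {a1 a2 : Pt m} (hne : a1.1 ≠ a2.1) :
    good P x a1 a2 ↔ good P' x' a1 a2 := by
  rcases lt_or_gt_of_ne hne with hlt | hgt
  · rw [← mem_altU_iff_good hlt, ← mem_altU_iff_good hlt, h]
  · rw [good_symm, ← mem_altU_iff_good hgt, good_symm (P := P'),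
      ← mem_altU_iff_good hgt, h]

lemma good_prim_iff {P : Setoid (Fin m)} {x : Fin m → Dm} (i j : Fin m) :
    good P x (prim i, (0:ℤ)) (prim j, (0:ℤ)) ↔ P.r i j := by
  constructor
  · rintro ⟨b, ⟨k1, hb1, hk1⟩, ⟨k2, hb2, hk2⟩⟩
    rw [altRegion_prim] at hk1 hk2
    subst hk1; subst hk2
    exact P.iseqv.trans (P.iseqv.symm hb1) hb2
  · intro hij
    exact ⟨i, ⟨i, P.iseqv.refl i, (altRegion_prim x i i 0).mpr rfl⟩,
      ⟨j, hij, (altRegion_prim x j j 0).mpr rfl⟩⟩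

lemma good_unpr_iff {P : Setoid (Fin m)} {x : Fin m → Dm} (j : Fin m) (n : ℤ) :
    good P x (unpr j, n) (prim (cycSucc j), (0:ℤ)) ↔ x j ≤ toDm n := by
  constructor
  · rintro ⟨b, ⟨k1, hb1, hk1⟩, -⟩
    rw [altRegion_unpr] at hk1
    exact hk1.2
  · intro hx
    exact ⟨cycSucc j,
      ⟨cycSucc j, P.iseqv.refl _, (altRegion_unpr x _ j n).mpr ⟨rfl, hx⟩⟩,
      ⟨cycSucc j, P.iseqv.refl _, (altRegion_prim x _ _ 0).mpr rfl⟩⟩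

end Aux

end PY

open PY in
theorem altU_injective
    (m : ℕ) (hm : 0 < m)
    (P P' : Setoid (Fin m)) (x x' : Fin m → Dm)
    (hP : IsNoncrossing P) (hP' : IsNoncrossing P')
    (h : altU P x = altU P' x') :
    P = P' ∧ x = x' := by
  refine ⟨?_, ?_⟩
  · apply Setoid.ext
    intro i j
    by_cases hij : i = j
    · subst hij
      exact iff_of_true (P.iseqv.refl i) (P'.iseqv.refl i)
    · have hne : ((prim i, (0:ℤ)) : Pt m).1 ≠ ((prim j, (0:ℤ)) : Pt m).1 :=
        fun hh => hij (prim_inj hh)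
      rw [← good_prim_iff (x := x) i j, good_congr h hne, good_prim_iff]
  · funext j
    apply dm_ext
    intro n
    have hne : ((unpr j, n) : Pt m).1 ≠ ((prim (cycSucc j), (0:ℤ)) : Pt m).1 :=
      Ne.symm (prim_ne_unpr _ _)
    rw [← good_unpr_iff (P := P) (x := x) j n, good_congr h hne, good_unpr_iff]
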